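/- arXiv:math/0301073 — 3 statements merged into one kernel-verified Lean document; each statement's English description precedes it below -/
import Mathlib

section
/- Let n ≥ 1, let V ⊆ ℝ^{2n} be open, and let Z ⊂ V be nonempty and compact. Then c_HZ(V,Z) = inf{C > 0 : every smooth H : ℝ^{2n} → ℝ whose support is a compact subset of V and which satisfies min_Z H > C has a fast periodic orbit}, with the convention that the infimum of the empty set is +∞. -/
/-!
Every `H ∈ 𝓗(V, Z)` is constant on `Z`, equal to `min_Z H = max H`, which gives `c_HZ(V, Z) ≤ inf`.
Conversely, let `H` be compactly supported in `V` with `min_Z H > C` and no fast orbit. Compose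
it with a smooth nondecreasing ramp `f` of slope at most `1`, with `f 0 = 0` and `f = C` above
some level below `min_Z H`. Then `f ∘ H ∈ 𝓗(V, Z)` with maximum `C`. Since `H` is conserved,
`X_{f ∘ H} = f'(H) X_H` is a constant multiple of `X_H` along each orbit, so the orbits of
`f ∘ H` are orbits of `H` run at speed `f'(H) ≤ 1`, and `f ∘ H` has no fast orbit either.
Hence `C ≤ c_HZ(V, Z)`.
-/

open scoped RealInnerProductSpace ENNReal NNReal Topology
open Metric Set

noncomputable section

/-- `ℝ^{2n}` identified with `ℂ^n`, with the standard (real) inner product and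
the standard complex structure `J` given by multiplication by `i`. -/
abbrev Esp (n : ℕ) := EuclideanSpace ℂ (Fin n)

variable {n : ℕ}

/-- The Hamiltonian vector field `X_H = J ∇H` of `H : ℝ^{2n} → ℝ`. -/
def hamVF (H : Esp n → ℝ) (x : Esp n) : Esp n := Complex.I • gradient H x

/-- A nonconstant `T`-periodic orbit of the Hamiltonian flow of `H`:
a nonconstant solution `γ` of `γ' = J∇H(γ)` with `γ (t + T) = γ t`. -/
def IsPeriodicOrbit (H : Esp n → ℝ) (γ : ℝ → Esp n) (T : ℝ) : Prop :=
  0 < T ∧ (∀ t, HasDerivAt γ (hamVF H (γ t)) t) ∧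
    (∀ t, γ (t + T) = γ t) ∧ ∃ t₀ t₁, γ t₀ ≠ γ t₁

/-- `H` has a fast (period `≤ 1`) nonconstant periodic orbit. -/
def HasFastOrbit (H : Esp n → ℝ) : Prop :=
  ∃ γ T, IsPeriodicOrbit H γ T ∧ T ≤ 1

/-- The symplectic action of a `1`-periodic loop `γ` with respect to the
(possibly time-dependent) Hamiltonian `H`:
`A_H(γ) = -(1/2)∫₀¹ ⟨Jγ(t), γ'(t)⟩ dt + ∫₀¹ H(t, γ(t)) dt`. -/
def action (H : ℝ → Esp n → ℝ) (γ : ℝ → Esp n) : ℝ :=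
  -(1 / 2) * (∫ t in (0:ℝ)..1, ⟪(Complex.I • γ t : Esp n), deriv γ t⟫) +
    ∫ t in (0:ℝ)..1, H t (γ t)

/-- The class `𝓗(V, Z)`: smooth functions on `ℝ^{2n}` with compact support
contained in `V`, constant on a neighborhood of `Z`, whose value on `Z` is the
maximum of `H`. -/
def InHclass (V Z : Set (Esp n)) (H : Esp n → ℝ) : Prop :=
  ContDiff ℝ (⊤ : ℕ∞) H ∧ IsCompact (tsupport H) ∧ tsupport H ⊆ V ∧
    (∃ U, IsOpen U ∧ Z ⊆ U ∧ ∃ c : ℝ, ∀ x ∈ U, H x = c) ∧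
    ∀ z ∈ Z, ∀ x, H x ≤ H z

/-- The relative Hofer–Zehnder capacity `c_HZ(V, Z)`: the supremum of `max H`
over all `H ∈ 𝓗(V, Z)` having no fast nonconstant periodic orbit (for `z ∈ Z`,
`H z = max H`). -/
def relCap (V Z : Set (Esp n)) : ℝ≥0∞ :=
  sSup {c | ∃ H, InHclass V Z H ∧ ¬ HasFastOrbit H ∧
    ∃ z ∈ Z, c = ENNReal.ofReal (H z)}

/- The real inner product of `EuclideanSpace ℂ ι` is the `PiLp` one, not `Inner.rclikeToReal`,
so `real_inner_I_smul_self` only applies coordinatewise. -/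
lemma inner_I_smul_self {ι : Type*} [Fintype ι] (v : EuclideanSpace ℂ ι) :
    ⟪v, (Complex.I • v : EuclideanSpace ℂ ι)⟫ = 0 := by
  simp only [PiLp.inner_apply]
  exact Finset.sum_eq_zero fun i _ => real_inner_I_smul_self ℂ (v i)

theorem HasDerivAt.comp_hasGradientAt {F : Type*} [NormedAddCommGroup F] [InnerProductSpace ℝ F]
    [CompleteSpace F] {f : ℝ → ℝ} {g : F → ℝ} {f' : ℝ} {g' : F} {x : F}
    (hf : HasDerivAt f f' (g x)) (hg : HasGradientAt g g' x) :
    HasGradientAt (f ∘ g) (f' • g') x := by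
  rw [hasGradientAt_iff_hasFDerivAt, map_smul]
  exact hf.comp_hasFDerivAt x hg.hasFDerivAt

lemma hamVF_comp {f : ℝ → ℝ} {H : Esp n → ℝ} {x : Esp n} (hf : DifferentiableAt ℝ f (H x))
    (hH : DifferentiableAt ℝ H x) : hamVF (f ∘ H) x = deriv f (H x) • hamVF H x := by
  rw [hamVF, hamVF, (hf.hasDerivAt.comp_hasGradientAt hH.hasGradientAt).gradient, smul_comm]

lemma apply_eq_of_hasDerivAt_smul_hamVF {H : Esp n → ℝ} (hH : Differentiable ℝ H) {c : ℝ → ℝ}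
    {γ : ℝ → Esp n} (hγ : ∀ t, HasDerivAt γ (c t • hamVF H (γ t)) t) (t s : ℝ) :
    H (γ t) = H (γ s) := by
  have hderiv : ∀ t, HasDerivAt (H ∘ γ) 0 t := fun t => by
    refine ((hH (γ t)).hasGradientAt.hasFDerivAt.comp_hasDerivAt t (hγ t)).congr_deriv ?_
    rw [InnerProductSpace.toDual_apply_apply, hamVF, real_inner_smul_right, inner_I_smul_self,
      mul_zero]
  exact is_const_of_deriv_eq_zero (fun t => (hderiv t).differentiableAt)
    (fun t => (hderiv t).deriv) t s

lemma isPeriodicOrbit_comp_mul {H : Esp n → ℝ} {γ : ℝ → Esp n} {c T t₀ t₁ : ℝ} (hc : 0 < c)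
    (hT : 0 < T) (hγ : ∀ t, HasDerivAt γ (c • hamVF H (γ t)) t) (hper : ∀ t, γ (t + T) = γ t)
    (hne : γ t₀ ≠ γ t₁) : IsPeriodicOrbit H (fun t => γ (c⁻¹ * t)) (c * T) := by
  refine ⟨mul_pos hc hT, fun t => ?_, fun t => ?_, c * t₀, c * t₁, ?_⟩
  · have := (hγ (c⁻¹ * t)).scomp t ((hasDerivAt_id t).const_mul c⁻¹)
    rwa [mul_one, smul_smul, inv_mul_cancel₀ hc.ne', one_smul] at this
  · simp only [mul_add, inv_mul_cancel_left₀ hc.ne', hper]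
  · simpa [inv_mul_cancel_left₀ hc.ne'] using hne

theorem HasFastOrbit.of_comp {H : Esp n → ℝ} {f : ℝ → ℝ} (hH : Differentiable ℝ H)
    (hf : Differentiable ℝ f) (hf0 : ∀ s, 0 ≤ deriv f s) (hf1 : ∀ s, deriv f s ≤ 1) :
    HasFastOrbit (f ∘ H) → HasFastOrbit H := by
  rintro ⟨γ, T, ⟨hT, hγ, hper, t₀, t₁, hne⟩, hT1⟩
  have hγ' : ∀ t, HasDerivAt γ (deriv f (H (γ t)) • hamVF H (γ t)) t := fun t =>
    hamVF_comp (hf _) (hH _) ▸ hγ t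
  have hγc : ∀ t, HasDerivAt γ (deriv f (H (γ 0)) • hamVF H (γ t)) t := fun t => by
    rw [apply_eq_of_hasDerivAt_smul_hamVF hH hγ' 0 t]
    exact hγ' t
  rcases (hf0 (H (γ 0))).eq_or_lt with hc0 | hc0
  · have hγ0 : ∀ t, HasDerivAt γ 0 t := fun t => by simpa [← hc0] using hγc t
    exact absurd (is_const_of_deriv_eq_zero (fun t => (hγ0 t).differentiableAt)
      (fun t => (hγ0 t).deriv) t₀ t₁) hne
  · exact ⟨_, _, isPeriodicOrbit_comp_mul hc0 hT hγc hper hne, mul_le_one₀ (hf1 _) hT.le hT1⟩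

lemma exists_contDiff_step_lt_integral {a b : ℝ} (ha : 0 ≤ a) (hab : a < b) :
    ∃ g : ℝ → ℝ, ContDiff ℝ (⊤ : ℕ∞) g ∧ (∀ s, 0 ≤ g s ∧ g s ≤ 1) ∧ (∀ s, b ≤ s → g s = 0) ∧
      a < ∫ s in (0 : ℝ)..b, g s := by
  set ε := (b - a) / 2 with hε_def
  have hε : 0 < ε := by positivity
  have hbε : a < b - ε := by linarith
  set g : ℝ → ℝ := fun s => Real.smoothTransition ((b - s) / ε)
  have hg : Continuous g := by fun_prop
  have hg1 : ∀ s ∈ uIcc 0 (b - ε), g s = 1 := fun s hs => by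
    rw [uIcc_of_le (by linarith)] at hs
    exact Real.smoothTransition.one_of_one_le ((le_div_iff₀ hε).2 (by linarith [hs.2]))
  have hsplit : (∫ s in (0 : ℝ)..(b - ε), g s) + ∫ s in (b - ε)..b, g s = ∫ s in (0 : ℝ)..b, g s :=
    intervalIntegral.integral_add_adjacent_intervals (hg.intervalIntegrable _ _)
      (hg.intervalIntegrable _ _)
  have htail : 0 ≤ ∫ s in (b - ε)..b, g s :=
    intervalIntegral.integral_nonneg (by linarith) fun s _ => Real.smoothTransition.nonneg _
  refine ⟨g, Real.smoothTransition.contDiff.comp ((contDiff_const.sub contDiff_id).div_const ε),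
    fun s => ⟨Real.smoothTransition.nonneg _, Real.smoothTransition.le_one _⟩,
    fun s hs => Real.smoothTransition.zero_of_nonpos (div_nonpos_of_nonpos_of_nonneg
      (by linarith) hε.le), ?_⟩
  rw [← hsplit, intervalIntegral.integral_congr hg1]
  simp only [intervalIntegral.integral_const, sub_zero, smul_eq_mul, mul_one]
  linarith

lemma exists_contDiff_ramp {a b : ℝ} (ha : 0 ≤ a) (hab : a < b) :
    ∃ f : ℝ → ℝ, ContDiff ℝ (⊤ : ℕ∞) f ∧ f 0 = 0 ∧ (∀ s, b ≤ s → f s = a) ∧ (∀ s, f s ≤ a) ∧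
      ∀ s, 0 ≤ deriv f s ∧ deriv f s ≤ 1 := by
  obtain ⟨g, hg, hg01, hgb, hI⟩ := exists_contDiff_step_lt_integral ha hab
  set I := ∫ s in (0 : ℝ)..b, g s
  have hI0 : 0 < I := ha.trans_lt hI
  set f : ℝ → ℝ := fun s => a / I * ∫ t in (0 : ℝ)..s, g t
  have hf' : ∀ s, HasDerivAt f (a / I * g s) s := fun s =>
    (hg.continuous.integral_hasStrictDerivAt 0 s).hasDerivAt.const_mul _
  have hf'_nonneg : ∀ s, 0 ≤ a / I * g s := fun s => mul_nonneg (by positivity) (hg01 s).1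
  have hfb : ∀ s, b ≤ s → f s = a := fun s hs => by
    have htail : ∫ t in b..s, g t = 0 := by
      rw [intervalIntegral.integral_congr (g := 0) fun t ht => hgb t (uIcc_of_le hs ▸ ht).1]
      simp
    simp only [f, ← intervalIntegral.integral_add_adjacent_intervals
      (hg.continuous.intervalIntegrable 0 b) (hg.continuous.intervalIntegrable b s), htail,
      add_zero]
    exact div_mul_cancel₀ a hI0.ne'
  have hmono : Monotone f :=
    monotone_of_deriv_nonneg (fun s => (hf' s).differentiableAt) fun s =>
      (hf' s).deriv ▸ hf'_nonneg s
  refine ⟨f, ?_, by simp [f], hfb, fun s => ?_, fun s => ?_⟩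
  · refine contDiff_infty_iff_deriv.2 ⟨fun s => (hf' s).differentiableAt, ?_⟩
    rw [funext fun s => (hf' s).deriv]
    exact contDiff_const.mul hg
  · calc f s ≤ f (max s b) := hmono (le_max_left s b)
      _ = a := hfb _ (le_max_right s b)
  · rw [(hf' s).deriv]
    exact ⟨hf'_nonneg s, mul_le_one₀ ((div_le_one hI0).2 hI.le) (hg01 s).1 (hg01 s).2⟩

lemma InHclass.image_eq_singleton {V Z : Set (Esp n)} {H : Esp n → ℝ} (hH : InHclass V Z H)
    {z : Esp n} (hz : z ∈ Z) : H '' Z = {H z} := by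
  obtain ⟨-, -, -, ⟨U, -, hZU, c, hc⟩, -⟩ := hH
  refine eq_singleton_iff_unique_mem.2 ⟨⟨z, hz, rfl⟩, ?_⟩
  rintro _ ⟨x, hx, rfl⟩
  rw [hc x (hZU hx), hc z (hZU hz)]

lemma relCap_le_of_forall_hasFastOrbit {V Z : Set (Esp n)} {C : ℝ≥0∞}
    (hC : ∀ H : Esp n → ℝ, ContDiff ℝ (⊤ : ℕ∞) H → IsCompact (tsupport H) → tsupport H ⊆ V →
      C < ENNReal.ofReal (sInf (H '' Z)) → HasFastOrbit H) :
    relCap V Z ≤ C := by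
  refine sSup_le ?_
  rintro _ ⟨H, hH, hno, z, hz, rfl⟩
  by_contra! hlt
  refine hno (hC H hH.1 hH.2.1 hH.2.2.1 ?_)
  rwa [hH.image_eq_singleton hz, csInf_singleton]

lemma ofReal_le_relCap {V Z : Set (Esp n)} (hZ : IsCompact Z) (hZne : Z.Nonempty)
    {H : Esp n → ℝ} (hH : ContDiff ℝ (⊤ : ℕ∞) H) (hcpt : IsCompact (tsupport H))
    (hV : tsupport H ⊆ V) (hno : ¬ HasFastOrbit H) {a : ℝ} (ha : 0 ≤ a)
    (haH : a < sInf (H '' Z)) :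
    ENNReal.ofReal a ≤ relCap V Z := by
  obtain ⟨b, hab, hbH⟩ := exists_between haH
  have hmin : ∀ z ∈ Z, b < H z := fun z hz =>
    hbH.trans_le (csInf_le (hZ.image hH.continuous).bddBelow ⟨z, hz, rfl⟩)
  obtain ⟨f, hf, hf0, hfb, hfa, hf'⟩ := exists_contDiff_ramp ha hab
  have hfZ : ∀ z ∈ Z, (f ∘ H) z = a := fun z hz => hfb _ (hmin z hz).le
  have hsupp : tsupport (f ∘ H) ⊆ tsupport H := tsupport_comp_subset hf0 H
  have hclass : InHclass V Z (f ∘ H) :=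
    ⟨hf.comp hH, hcpt.of_isClosed_subset (isClosed_tsupport _) hsupp, hsupp.trans hV,
      ⟨H ⁻¹' Ioi b, isOpen_Ioi.preimage hH.continuous, hmin, a, fun x hx => hfb _ (le_of_lt hx)⟩,
      fun z hz x => (hfZ z hz).symm ▸ hfa _⟩
  have hno' : ¬ HasFastOrbit (f ∘ H) := fun h =>
    hno (h.of_comp (hH.differentiable (by simp)) (hf.differentiable (by simp))
      (fun s => (hf' s).1) fun s => (hf' s).2)
  obtain ⟨z, hz⟩ := hZne
  exact le_sSup ⟨f ∘ H, hclass, hno', z, hz, by rw [hfZ z hz]⟩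

theorem stmt_2_general (n : ℕ) (V Z : Set (Esp n))
    (hZcpt : IsCompact Z) (hZne : Z.Nonempty) :
    relCap V Z = sInf {C : ℝ≥0∞ | 0 < C ∧ ∀ H : Esp n → ℝ,
      ContDiff ℝ (⊤ : ℕ∞) H → IsCompact (tsupport H) → tsupport H ⊆ V →
      C < ENNReal.ofReal (sInf (H '' Z)) → HasFastOrbit H} := by
  refine le_antisymm (le_sInf fun C hC => relCap_le_of_forall_hasFastOrbit hC.2)
    (le_of_forall_gt_imp_ge_of_dense fun C hC => sInf_le ⟨pos_of_gt hC, ?_⟩)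
  intro H hH hcpt hV hCH
  by_contra hno
  have hCtop : C ≠ ⊤ := ne_top_of_lt hCH
  have hle := ofReal_le_relCap hZcpt hZne hH hcpt hV hno ENNReal.toReal_nonneg
    ((ENNReal.lt_ofReal_iff_toReal_lt hCtop).1 hCH)
  rw [ENNReal.ofReal_toReal hCtop] at hle
  exact (hle.trans_lt hC).false

/-- **Theorem 2.7(1) of Ginzburg–Gürel** for open subsets of standard `ℝ^{2n}`:
the relative Hofer–Zehnder capacity `c_HZ(V, Z)` equals the infimum of the set
of constants `C > 0` such that every smooth `H` with compact support in `V`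
and `min_Z H > C` has a fast nonconstant periodic orbit (with `sInf ∅ = ∞`). -/
theorem stmt_2 (n : ℕ) (hn : 1 ≤ n) (V Z : Set (Esp n)) (hV : IsOpen V)
    (hZcpt : IsCompact Z) (hZne : Z.Nonempty) (hZV : Z ⊆ V) :
    relCap V Z = sInf {C : ℝ≥0∞ | 0 < C ∧ ∀ H : Esp n → ℝ,
      ContDiff ℝ (⊤ : ℕ∞) H → IsCompact (tsupport H) → tsupport H ⊆ V →
      C < ENNReal.ofReal (sInf (H '' Z)) → HasFastOrbit H} :=
  stmt_2_general n V Z hZcpt hZne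
end
end

section
/- Let n ≥ 1, let V ⊆ ℝ^{2n} be open, let U ⊆ V be open with compact closure Ū contained in V, and let Z ⊂ U be nonempty and compact. Then c_HZ(U,Z) + c_HZ(V,Ū) ≤ c_HZ(V,Z), where the sum is taken in (0,+∞]. In particular, for any p ∈ U, c_HZ(U,{p}) + c_HZ(V,Ū) ≤ c_HZ(V,{p}). -/
open scoped RealInnerProductSpace ENNReal NNReal Topology
open Metric Set

noncomputable section

variable {n : ℕ}

/-! For `H₁ ∈ 𝓗(U, Z)` and `H₂ ∈ 𝓗(V, Ū)` without fast orbits, `H₁ + H₂ ∈ 𝓗(V, Z)` has maximum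
`max H₁ + max H₂` and no fast orbit either. Indeed `H₂` is constant on an open `W ⊇ Ū ⊇ supp H₁`,
so `X_{H₁ + H₂}` vanishes on `W \ supp H₁` and a nonconstant orbit never enters that set. Hence,
by connectedness, the orbit stays inside `W`, where it is an orbit of `H₁`, or outside `W`,
where it is an orbit of `H₂`. -/

theorem eq_of_hasDerivAt_of_mem_isOpen {E : Type*} [NormedAddCommGroup E] [NormedSpace ℝ E]
    {γ w : ℝ → E} (hγ : ∀ t, HasDerivAt γ (w t) t) {O : Set E} (hO : IsOpen O)
    (hw : ∀ t, γ t ∈ O → w t = 0) {s : ℝ} (hs : γ s ∈ O) (t : ℝ) : γ t = γ s := by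
  have hc : Continuous γ := continuous_iff_continuousAt.2 fun t => (hγ t).continuousAt
  have hopen : IsOpen (γ ⁻¹' O ∩ γ ⁻¹' {γ s}) :=
    (hO.preimage hc).isOpen_inter_preimage_of_deriv_eq_zero
      (fun t _ => (hγ t).differentiableAt.differentiableWithinAt)
      (fun t ht => by simp [(hγ t).deriv, hw t ht]) _
  have hlevel : γ ⁻¹' O ∩ γ ⁻¹' {γ s} = γ ⁻¹' {γ s} :=
    inter_eq_right.2 fun u hu => by simpa [mem_singleton_iff.1 hu] using hs
  have hclopen : IsClopen (γ ⁻¹' {γ s}) := ⟨isClosed_singleton.preimage hc, hlevel ▸ hopen⟩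
  exact eq_univ_iff_forall.1 (hclopen.eq_univ ⟨s, rfl⟩) t

theorem Continuous.forall_mem_or_forall_notMem {X Y : Type*} [TopologicalSpace X]
    [PreconnectedSpace X] [TopologicalSpace Y] {f : X → Y} (hf : Continuous f) {W K : Set Y}
    (hW : IsOpen W) (hK : IsClosed K) (hKW : K ⊆ W) (h : ∀ x, f x ∈ W → f x ∈ K) :
    (∀ x, f x ∈ W) ∨ ∀ x, f x ∉ W := by
  have hpre : f ⁻¹' W = f ⁻¹' K := subset_antisymm h fun x hx => hKW hx
  rcases isClopen_iff.1 ⟨hpre ▸ hK.preimage hf, hW.preimage hf⟩ with hempty | huniv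
  · exact Or.inr fun x hx => (hempty ▸ hx : x ∈ (∅ : Set X))
  · exact Or.inl fun x => (huniv ▸ mem_univ x : x ∈ f ⁻¹' W)

section Hamiltonian

variable {H H' H₁ H₂ : Esp n → ℝ} {x : Esp n}

theorem hamVF_add (hd₁ : DifferentiableAt ℝ H₁ x) (hd₂ : DifferentiableAt ℝ H₂ x) :
    hamVF (H₁ + H₂) x = hamVF H₁ x + hamVF H₂ x := by
  simp only [hamVF, gradient, fderiv_add hd₁ hd₂, map_add, smul_add]

theorem hamVF_eq_zero_of_eventuallyEq_const {c : ℝ} (h : H =ᶠ[𝓝 x] fun _ => c) :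
    hamVF H x = 0 := by
  rw [hamVF, h.gradient_eq, gradient_fun_const, smul_zero]

theorem hamVF_eq_zero_of_notMem_tsupport (hx : x ∉ tsupport H) : hamVF H x = 0 :=
  hamVF_eq_zero_of_eventuallyEq_const (notMem_tsupport_iff_eventuallyEq.1 hx)

theorem hamVF_eq_zero_of_eqOn_const {W : Set (Esp n)} (hW : IsOpen W) {c : ℝ}
    (hc : ∀ y ∈ W, H y = c) (hx : x ∈ W) : hamVF H x = 0 :=
  hamVF_eq_zero_of_eventuallyEq_const (Filter.eventually_of_mem (hW.mem_nhds hx) hc)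

namespace IsPeriodicOrbit

variable {γ : ℝ → Esp n} {T : ℝ}

theorem continuous (h : IsPeriodicOrbit H γ T) : Continuous γ :=
  continuous_iff_continuousAt.2 fun t => (h.2.1 t).continuousAt

theorem notMem_of_hamVF_eq_zero (h : IsPeriodicOrbit H γ T) {O : Set (Esp n)} (hO : IsOpen O)
    (hX : ∀ y ∈ O, hamVF H y = 0) (t : ℝ) : γ t ∉ O := by
  intro ht
  obtain ⟨t₀, t₁, hne⟩ := h.2.2.2
  have hconst := eq_of_hasDerivAt_of_mem_isOpen h.2.1 hO (fun u hu => hX _ hu) ht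
  exact hne ((hconst t₀).trans (hconst t₁).symm)

theorem congr (h : IsPeriodicOrbit H γ T) (hX : ∀ t, hamVF H (γ t) = hamVF H' (γ t)) :
    IsPeriodicOrbit H' γ T :=
  ⟨h.1, fun t => hX t ▸ h.2.1 t, h.2.2⟩

theorem of_add (h : IsPeriodicOrbit (H₁ + H₂) γ T) (hd₁ : Differentiable ℝ H₁)
    (hd₂ : Differentiable ℝ H₂) {W : Set (Esp n)} (hW : IsOpen W) (hsupp : tsupport H₁ ⊆ W)
    {c : ℝ} (hc : ∀ y ∈ W, H₂ y = c) :
    IsPeriodicOrbit H₁ γ T ∨ IsPeriodicOrbit H₂ γ T := by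
  have hX₁ : ∀ y ∉ tsupport H₁, hamVF (H₁ + H₂) y = hamVF H₂ y := fun y hy => by
    rw [hamVF_add (hd₁ y) (hd₂ y), hamVF_eq_zero_of_notMem_tsupport hy, zero_add]
  have hX₂ : ∀ y ∈ W, hamVF (H₁ + H₂) y = hamVF H₁ y := fun y hy => by
    rw [hamVF_add (hd₁ y) (hd₂ y), hamVF_eq_zero_of_eqOn_const hW hc hy, add_zero]
  have havoid := h.notMem_of_hamVF_eq_zero (hW.sdiff (isClosed_tsupport H₁))
    fun y hy => (hX₁ y hy.2).trans (hamVF_eq_zero_of_eqOn_const hW hc hy.1)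
  rcases h.continuous.forall_mem_or_forall_notMem hW (isClosed_tsupport H₁) hsupp
    (fun t ht => not_not.1 fun hns => havoid t ⟨ht, hns⟩) with hin | hout
  · exact Or.inl (h.congr fun t => hX₂ _ (hin t))
  · exact Or.inr (h.congr fun t => hX₁ _ fun hs => hout t (hsupp hs))

end IsPeriodicOrbit

theorem not_hasFastOrbit_zero : ¬ HasFastOrbit (0 : Esp n → ℝ) := fun ⟨_, _, h, _⟩ =>
  h.notMem_of_hamVF_eq_zero isOpen_univ
    (fun _ _ => hamVF_eq_zero_of_eventuallyEq_const (c := 0) (.of_forall fun _ => rfl)) 0 trivial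

theorem not_hasFastOrbit_add (hd₁ : Differentiable ℝ H₁) (hd₂ : Differentiable ℝ H₂)
    {W : Set (Esp n)} (hW : IsOpen W) (hsupp : tsupport H₁ ⊆ W) {c : ℝ}
    (hc : ∀ y ∈ W, H₂ y = c) (h₁ : ¬ HasFastOrbit H₁) (h₂ : ¬ HasFastOrbit H₂) :
    ¬ HasFastOrbit (H₁ + H₂) := by
  rintro ⟨γ, T, hγ, hT⟩
  rcases hγ.of_add hd₁ hd₂ hW hsupp hc with hγ₁ | hγ₂
  · exact h₁ ⟨γ, T, hγ₁, hT⟩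
  · exact h₂ ⟨γ, T, hγ₂, hT⟩

end Hamiltonian

namespace InHclass

variable {U V Y Z : Set (Esp n)} {H H₁ H₂ : Esp n → ℝ}

theorem zero : InHclass V Z (0 : Esp n → ℝ) := by
  refine ⟨contDiff_const, ?_, ?_, ⟨univ, isOpen_univ, subset_univ Z, 0, fun _ _ => rfl⟩,
    fun _ _ _ => le_rfl⟩ <;> simp

theorem add (h₁ : InHclass U Z H₁) (h₂ : InHclass V Y H₂) (hUV : U ⊆ V) (hZY : Z ⊆ Y) :
    InHclass V Z (H₁ + H₂) := by
  obtain ⟨hs₁, hc₁, hsupp₁, ⟨W₁, hW₁, hZW₁, c₁, hcW₁⟩, hmax₁⟩ := h₁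
  obtain ⟨hs₂, hc₂, hsupp₂, ⟨W₂, hW₂, hYW₂, c₂, hcW₂⟩, hmax₂⟩ := h₂
  have hsupp : tsupport (H₁ + H₂) ⊆ tsupport H₁ ∪ tsupport H₂ := tsupport_add H₁ H₂
  refine ⟨hs₁.add hs₂, (hc₁.union hc₂).of_isClosed_subset (isClosed_tsupport _) hsupp,
    hsupp.trans (union_subset (hsupp₁.trans hUV) hsupp₂),
    ⟨W₁ ∩ W₂, hW₁.inter hW₂, subset_inter hZW₁ (hZY.trans hYW₂), c₁ + c₂,
      fun y hy => by rw [Pi.add_apply, hcW₁ y hy.1, hcW₂ y hy.2]⟩,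
    fun z hz y => add_le_add (hmax₁ z hz y) (hmax₂ z (hZY hz) y)⟩

theorem nonneg [NoncompactSpace (Esp n)] (h : InHclass V Z H) {z : Esp n} (hz : z ∈ Z) :
    0 ≤ H z := by
  obtain ⟨y, hy⟩ := (ne_univ_iff_exists_notMem _).1 h.2.1.ne_univ
  exact image_eq_zero_of_notMem_tsupport hy ▸ h.2.2.2.2 z hz y

end InHclass

theorem ofReal_le_relCap_s7 {V Z : Set (Esp n)} {H : Esp n → ℝ} (h : InHclass V Z H)
    (hH : ¬ HasFastOrbit H) {z : Esp n} (hz : z ∈ Z) : ENNReal.ofReal (H z) ≤ relCap V Z :=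
  le_sSup ⟨H, h, hH, z, hz, rfl⟩

theorem relCap_add_relCap_le [NoncompactSpace (Esp n)] {U V Y Z : Set (Esp n)} (hUV : U ⊆ V)
    (hUY : U ⊆ Y) (hZU : Z ⊆ U) (hZ : Z.Nonempty) :
    relCap U Z + relCap V Y ≤ relCap V Z := by
  obtain ⟨z₀, hz₀⟩ := hZ
  rw [relCap, ENNReal.sSup_add ?nonempty_left]
  case nonempty_left => exact ⟨_, 0, InHclass.zero, not_hasFastOrbit_zero, z₀, hz₀, rfl⟩
  refine iSup₂_le ?_
  rintro _ ⟨H₁, h₁, hfast₁, z, hz, rfl⟩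
  rw [relCap, ENNReal.add_sSup ?nonempty_right]
  case nonempty_right =>
    exact ⟨_, 0, InHclass.zero, not_hasFastOrbit_zero, z₀, hUY (hZU hz₀), rfl⟩
  refine iSup₂_le ?_
  rintro _ ⟨H₂, h₂, hfast₂, y, hy, rfl⟩
  obtain ⟨W, hW, hYW, c, hc⟩ := h₂.2.2.2.1
  have hzY : z ∈ Y := hUY (hZU hz)
  have hy_eq : H₂ y = H₂ z := le_antisymm (h₂.2.2.2.2 z hzY y) (h₂.2.2.2.2 y hy z)
  calc ENNReal.ofReal (H₁ z) + ENNReal.ofReal (H₂ y)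
      = ENNReal.ofReal ((H₁ + H₂) z) := by
        rw [hy_eq, Pi.add_apply, ENNReal.ofReal_add (h₁.nonneg hz) (h₂.nonneg hzY)]
    _ ≤ relCap V Z := ofReal_le_relCap_s7 (h₁.add h₂ hUV (hZU.trans hUY))
        (not_hasFastOrbit_add (h₁.1.differentiable (by simp)) (h₂.1.differentiable (by simp))
          hW (h₁.2.2.1.trans (hUY.trans hYW)) hc hfast₁ hfast₂) hz

theorem stmt_7_general (n : ℕ) (hn : 1 ≤ n) (V U Z : Set (Esp n)) (hUV : U ⊆ V)
    (hZne : Z.Nonempty) (hZU : Z ⊆ U) :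
    relCap U Z + relCap V (closure U) ≤ relCap V Z ∧
      ∀ p ∈ U, relCap U {p} + relCap V (closure U) ≤ relCap V {p} := by
  have : NeZero n := ⟨by omega⟩
  exact ⟨relCap_add_relCap_le hUV subset_closure hZU hZne, fun p hp =>
    relCap_add_relCap_le hUV subset_closure (singleton_subset_iff.2 hp) (singleton_nonempty p)⟩

/-- **Proposition 5.3 of Ginzburg–Gürel** for open subsets of standard
`ℝ^{2n}`: if `U` is open with compact closure `Ū ⊆ V` and `Z ⊂ U` is nonempty
compact, then `c_HZ(U, Z) + c_HZ(V, Ū) ≤ c_HZ(V, Z)`; in particular, for any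
`p ∈ U`, `c_HZ(U, {p}) + c_HZ(V, Ū) ≤ c_HZ(V, {p})`. -/
theorem stmt_7 (n : ℕ) (hn : 1 ≤ n) (V U Z : Set (Esp n)) (hV : IsOpen V)
    (hU : IsOpen U) (hUV : U ⊆ V) (hUcl : IsCompact (closure U))
    (hUclV : closure U ⊆ V)
    (hZcpt : IsCompact Z) (hZne : Z.Nonempty) (hZU : Z ⊆ U) :
    relCap U Z + relCap V (closure U) ≤ relCap V Z ∧
      ∀ p ∈ U, relCap U {p} + relCap V (closure U) ≤ relCap V {p} :=
  stmt_7_general n hn V U Z hUV hZne hZU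
end
end

section
/- For every n ≥ 1 and all R > 0 and c > 0, there exists a smooth nonnegative function H : ℝ^{2n} → ℝ whose support is a compact subset of the open ball B_R of radius R centered at the origin, with H(0) = max H = c, such that every nonconstant 1-periodic orbit γ of the Hamiltonian flow of H (every nonconstant solution of γ'(t) = J∇H(γ(t)) with γ(t+1) = γ(t)) has action A_H(γ) < c. In particular, the conclusion that H has a nonconstant 1-periodic orbit of action greater than max H fails if H is merely required to attain its maximum at the origin rather than being constant on a neighborhood of it. -/
/-!
Take `H(z) = a · E(r - |z|²)` with `E = expNegInvGlue` (`E y = exp (-1/y)` for `y > 0`, else `0`),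
`0 < r < min (R², 1/2)` and `a = c / E r`. For a radial Hamiltonian `H = f(|z|²)` one has
`∇H(z) = 2 f'(|z|²) z`, so along an orbit `⟨Jγ, γ'⟩ = 2 ρ f'(ρ)` with `ρ = |γ|²`, and the action
is the mean of `f(ρ) - ρ f'(ρ)`. For our `f` this is `a` times the value at `r` of the tangent
line to `E` at `r - ρ`. As `E` vanishes on `(-∞, 0]` and is strictly convex on `[0, 1/2]`, this
is `< a E r = c` whenever `ρ > 0`, and a nonconstant loop leaves the origin.
-/

open scoped RealInnerProductSpace ENNReal NNReal Topology
open Metric Set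

noncomputable section

variable {n : ℕ}

open Polynomial

def expNegInvGlueDeriv (y : ℝ) : ℝ := y⁻¹ ^ 2 * expNegInvGlue y

theorem hasDerivAt_expNegInvGlue (y : ℝ) :
    HasDerivAt expNegInvGlue (expNegInvGlueDeriv y) y := by
  simpa [expNegInvGlueDeriv] using expNegInvGlue.hasDerivAt_polynomial_eval_inv_mul 1 y

theorem continuous_expNegInvGlueDeriv : Continuous expNegInvGlueDeriv := by
  have h := expNegInvGlue.continuous_polynomial_eval_inv_mul (X ^ 2)
  simp only [eval_pow, eval_X] at h
  exact h

theorem strictMonoOn_expNegInvGlueDeriv : StrictMonoOn expNegInvGlueDeriv (Ioo 0 (1 / 2)) := by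
  refine strictMonoOn_of_deriv_pos (convex_Ioo 0 (1 / 2))
    continuous_expNegInvGlueDeriv.continuousOn fun y hy => ?_
  rw [interior_Ioo] at hy
  have hderiv : HasDerivAt expNegInvGlueDeriv
      (y⁻¹ ^ 3 * (y⁻¹ - 2) * expNegInvGlue y) y := by
    convert expNegInvGlue.hasDerivAt_polynomial_eval_inv_mul (X ^ 2) y using 1
    · ext z; simp [expNegInvGlueDeriv]
    · simp only [eval_mul, eval_pow, eval_X, eval_sub, derivative_X_pow, eval_C,
        Nat.cast_ofNat, Nat.add_one_sub_one, pow_one]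
      ring
  have hy₂ : 2 < y⁻¹ := by rw [lt_inv_comm₀ two_pos hy.1]; linarith [hy.2]
  rw [hderiv.deriv]
  exact mul_pos (mul_pos (pow_pos (inv_pos.2 hy.1) 3) (sub_pos.2 hy₂))
    (expNegInvGlue.pos_of_pos hy.1)

theorem strictConvexOn_expNegInvGlue : StrictConvexOn ℝ (Icc 0 (1 / 2)) expNegInvGlue := by
  refine StrictMonoOn.strictConvexOn_of_deriv (convex_Icc 0 (1 / 2))
    (expNegInvGlue.contDiff (n := 0)).continuous.continuousOn ?_
  rw [interior_Icc, funext fun y => (hasDerivAt_expNegInvGlue y).deriv]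
  exact strictMonoOn_expNegInvGlueDeriv

theorem expNegInvGlue_sub_add_mul_deriv_lt {r ρ : ℝ} (hr₀ : 0 < r) (hr : r ≤ 1 / 2)
    (hρ : 0 < ρ) :
    expNegInvGlue (r - ρ) + ρ * expNegInvGlueDeriv (r - ρ) < expNegInvGlue r := by
  rcases le_or_gt r ρ with hrρ | hρr
  · have hE : expNegInvGlue (r - ρ) = 0 := expNegInvGlue.zero_of_nonpos (by linarith)
    simpa [expNegInvGlueDeriv, hE] using expNegInvGlue.pos_of_pos hr₀
  · have hslope := strictConvexOn_expNegInvGlue.lt_slope_of_hasDerivAt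
      (x := r - ρ) (y := r) ⟨by linarith, by linarith⟩ ⟨hr₀.le, hr⟩ (by linarith)
      (hasDerivAt_expNegInvGlue _)
    rw [slope_def_field, sub_sub_cancel, lt_div_iff₀ hρ] at hslope
    linarith

theorem hasGradientAt_comp_norm_sq {F : Type*} [NormedAddCommGroup F] [InnerProductSpace ℝ F]
    [CompleteSpace F] {f : ℝ → ℝ} {f' : ℝ} {x : F}
    (hf : HasDerivAt f f' (‖x‖ ^ 2)) :
    HasGradientAt (fun y => f (‖y‖ ^ 2)) ((2 * f') • x) x := by
  rw [hasGradientAt_iff_hasFDerivAt]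
  refine (hf.comp_hasFDerivAt x (hasStrictFDerivAt_norm_sq x).hasFDerivAt).congr_fderiv ?_
  ext y
  simp
  ring

theorem inner_I_smul_hamVF_comp_norm_sq {f : ℝ → ℝ} {f' : ℝ} {x : Esp n}
    (hf : HasDerivAt f f' (‖x‖ ^ 2)) :
    ⟪(Complex.I • x : Esp n), hamVF (fun y => f (‖y‖ ^ 2)) x⟫ = 2 * (‖x‖ ^ 2 * f') := by
  rw [hamVF, (hasGradientAt_comp_norm_sq hf).gradient, smul_comm, real_inner_smul_right,
    real_inner_self_eq_norm_sq, norm_smul, Complex.norm_I, one_mul]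
  ring

theorem action_comp_norm_sq {f f' : ℝ → ℝ} (hf : ∀ y, HasDerivAt f (f' y) y)
    (hf' : Continuous f') {γ : ℝ → Esp n}
    (hγ : ∀ t, HasDerivAt γ (hamVF (fun y => f (‖y‖ ^ 2)) (γ t)) t) :
    action (fun _ y => f (‖y‖ ^ 2)) γ =
      ∫ t in (0 : ℝ)..1, (f (‖γ t‖ ^ 2) - ‖γ t‖ ^ 2 * f' (‖γ t‖ ^ 2)) := by
  have hγc : Continuous γ := continuous_iff_continuousAt.2 fun t => (hγ t).continuousAt
  have hfc : Continuous f := continuous_iff_continuousAt.2 fun y => (hf y).continuousAt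
  have hinner : ∀ t, ⟪(Complex.I • γ t : Esp n), deriv γ t⟫ =
      2 * (‖γ t‖ ^ 2 * f' (‖γ t‖ ^ 2)) := fun t => by
    rw [(hγ t).deriv, inner_I_smul_hamVF_comp_norm_sq (hf _)]
  have hf_int : IntervalIntegrable (fun t => f (‖γ t‖ ^ 2)) MeasureTheory.volume 0 1 :=
    Continuous.intervalIntegrable (by fun_prop) _ _
  have hf'_int :
      IntervalIntegrable (fun t => ‖γ t‖ ^ 2 * f' (‖γ t‖ ^ 2)) MeasureTheory.volume 0 1 :=
    Continuous.intervalIntegrable (by fun_prop) _ _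
  rw [action, intervalIntegral.integral_congr fun t _ => hinner t,
    intervalIntegral.integral_const_mul, intervalIntegral.integral_sub hf_int hf'_int]
  ring

theorem action_comp_norm_sq_lt {f f' : ℝ → ℝ} (hf : ∀ y, HasDerivAt f (f' y) y)
    (hf' : Continuous f') (hlt : ∀ y, 0 < y → f y - y * f' y < f 0) {γ : ℝ → Esp n}
    (hγ : ∀ t, HasDerivAt γ (hamVF (fun y => f (‖y‖ ^ 2)) (γ t)) t)
    (hper : Function.Periodic γ 1) (hnc : ∃ t₀ t₁, γ t₀ ≠ γ t₁) :
    action (fun _ y => f (‖y‖ ^ 2)) γ < f 0 := by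
  obtain ⟨t₀, t₁, hne⟩ := hnc
  have hmoves : ∃ t, γ t ≠ 0 := by
    by_contra! h
    exact hne ((h t₀).trans (h t₁).symm)
  obtain ⟨t, ht⟩ := hmoves
  obtain ⟨s, hs, hγs⟩ := hper.exists_mem_Ico₀ one_pos t
  have hγc : Continuous γ := continuous_iff_continuousAt.2 fun t => (hγ t).continuousAt
  have hfc : Continuous f := continuous_iff_continuousAt.2 fun y => (hf y).continuousAt
  have hle : ∀ y, 0 ≤ y → f y - y * f' y ≤ f 0 := fun y hy => by
    rcases hy.eq_or_lt with rfl | hy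
    · simp
    · exact (hlt y hy).le
  rw [action_comp_norm_sq hf hf' hγ]
  calc ∫ t in (0 : ℝ)..1, (f (‖γ t‖ ^ 2) - ‖γ t‖ ^ 2 * f' (‖γ t‖ ^ 2))
      < ∫ _ in (0 : ℝ)..1, f 0 :=
        intervalIntegral.integral_lt_integral_of_continuousOn_of_le_of_exists_lt one_pos
          (Continuous.continuousOn (by fun_prop)) continuousOn_const
          (fun t _ => hle _ (sq_nonneg _))
          ⟨s, Ico_subset_Icc_self hs, hlt _ (pow_pos (norm_pos_iff.2 (hγs ▸ ht)) 2)⟩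
    _ = f 0 := by simp

theorem hasDerivAt_const_mul_expNegInvGlue_sub (a r y : ℝ) :
    HasDerivAt (fun y => a * expNegInvGlue (r - y)) (-(a * expNegInvGlueDeriv (r - y))) y :=
  (((hasDerivAt_expNegInvGlue (r - y)).comp y ((hasDerivAt_id y).const_sub r)).const_mul a)
    |>.congr_deriv (by simp)

theorem tsupport_const_mul_expNegInvGlue_sub_norm_sq_subset {F : Type*}
    [NormedAddCommGroup F] (a r : ℝ) :
    tsupport (fun x : F => a * expNegInvGlue (r - ‖x‖ ^ 2)) ⊆ closedBall 0 √r := by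
  refine (closure_mono fun x hx => ?_).trans closure_ball_subset_closedBall
  have hpos : 0 < r - ‖x‖ ^ 2 := by
    by_contra! h
    exact hx (by simp [expNegInvGlue.zero_of_nonpos h])
  rw [mem_ball_zero_iff]
  exact Real.lt_sqrt_of_sq_lt (by linarith)

theorem stmt_19_general (n : ℕ) (R c : ℝ) (hR : 0 < R) (hc : 0 < c) :
    ∃ H : Esp n → ℝ, ContDiff ℝ (⊤ : ℕ∞) H ∧ (∀ x, 0 ≤ H x) ∧
      IsCompact (tsupport H) ∧ tsupport H ⊆ ball (0 : Esp n) R ∧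
      H 0 = c ∧ (∀ x, H x ≤ c) ∧
      ∀ γ : ℝ → Esp n, (∀ t, HasDerivAt γ (hamVF H (γ t)) t) →
        (∀ t, γ (t + 1) = γ t) → (∃ t₀ t₁, γ t₀ ≠ γ t₁) →
        action (fun _ => H) γ < c := by
  obtain ⟨r, hr₀, hr⟩ := exists_between (lt_min (pow_pos hR 2) one_half_pos)
  have hE : 0 < expNegInvGlue r := expNegInvGlue.pos_of_pos hr₀
  set a := c / expNegInvGlue r
  have ha : 0 < a := div_pos hc hE
  have haE : a * expNegInvGlue r = c := div_mul_cancel₀ c hE.ne'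
  have hsupp := tsupport_const_mul_expNegInvGlue_sub_norm_sq_subset (F := Esp n) a r
  refine ⟨fun x => a * expNegInvGlue (r - ‖x‖ ^ 2),
    contDiff_const.mul (expNegInvGlue.contDiff.comp (contDiff_const.sub (contDiff_norm_sq ℝ))),
    fun x => mul_nonneg ha.le (expNegInvGlue.nonneg _),
    (isCompact_closedBall 0 _).of_isClosed_subset (isClosed_tsupport _) hsupp,
    hsupp.trans (closedBall_subset_ball ((Real.sqrt_lt' hR).2 (lt_min_iff.1 hr).1)),
    by simpa using haE,
    fun x => haE ▸ mul_le_mul_of_nonneg_left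
      (expNegInvGlue.monotone (sub_le_self _ (sq_nonneg _))) ha.le, ?_⟩
  intro γ hγ hper hnc
  have htangent (y : ℝ) (hy : 0 < y) :
      a * expNegInvGlue (r - y) - y * -(a * expNegInvGlueDeriv (r - y)) <
        a * expNegInvGlue (r - 0) := by
    have := mul_lt_mul_of_pos_left
      (expNegInvGlue_sub_add_mul_deriv_lt hr₀ (lt_min_iff.1 hr).2.le hy) ha
    rw [sub_zero]
    linarith
  simpa [haE] using action_comp_norm_sq_lt (hasDerivAt_const_mul_expNegInvGlue_sub a r)
    ((continuous_expNegInvGlueDeriv.comp (continuous_sub_left r)).const_mul a).neg htangent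
    hγ hper hnc

/-- **Example 5.4 (`exam:actions`) of Ginzburg–Gürel for `M = {0} ⊂ ℝ^{2n}`**:
for any `R > 0` and `c > 0` there is a smooth nonnegative function `H` with
compact support in the ball `B_R`, attaining its maximum `c` at the origin,
such that every nonconstant `1`-periodic orbit of its Hamiltonian flow has
action `< c`. Hence the conclusion of Theorem 5.1 fails when `H` is merely
required to attain its maximum at the origin rather than being constant on a
neighborhood of it. -/
theorem stmt_19 (n : ℕ) (hn : 1 ≤ n) (R c : ℝ) (hR : 0 < R) (hc : 0 < c) :
    ∃ H : Esp n → ℝ, ContDiff ℝ (⊤ : ℕ∞) H ∧ (∀ x, 0 ≤ H x) ∧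
      IsCompact (tsupport H) ∧ tsupport H ⊆ ball (0 : Esp n) R ∧
      H 0 = c ∧ (∀ x, H x ≤ c) ∧
      ∀ γ : ℝ → Esp n, (∀ t, HasDerivAt γ (hamVF H (γ t)) t) →
        (∀ t, γ (t + 1) = γ t) → (∃ t₀ t₁, γ t₀ ≠ γ t₁) →
        action (fun _ => H) γ < c :=
  stmt_19_general n R c hR hc
end
end
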